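/- Let G be a connected undirected graph with strictly positive edge weights and let H, H' be subgraphs of G where H is connected and balanced (with respect to a linear class of cycles B). If some balanced subgraph strictly dominates H, and H' is chosen among balanced subgraphs dominating H to have minimum cost c_G(H'), then H' is connected. -/

import Mathlib

open scoped Classical

/-- The cost `c_G(H)` of a subgraph `H` of an edge-weighted graph `G`: the total
weight of the "deleted edges" of `H`, i.e. edges of `G` touching `V(H)` that are
not edges of `H` (this is `w(E(G[V(H)]) \ E(H)) + w(δ_G(V(H)))`). -/
noncomputable def subgraphCost {V : Type*} [Fintype V] (G : SimpleGraph V)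
    (w : Sym2 V → ℕ) (H : G.Subgraph) : ℕ :=
  ∑ e ∈ G.edgeFinset.filter (fun e => (∃ x ∈ e, x ∈ H.verts) ∧ e ∉ H.edgeSet), w e

/-- `H'` dominates `H`: `V(H) ⊆ V(H')` and `c_G(H') ≤ c_G(H)`. -/
def Dominates {V : Type*} [Fintype V] (G : SimpleGraph V) (w : Sym2 V → ℕ)
    (H' H : G.Subgraph) : Prop :=
  H.verts ⊆ H'.verts ∧ subgraphCost G w H' ≤ subgraphCost G w H

/-- `H'` strictly dominates `H`: domination with at least one strict inequality. -/
def StrictlyDominates {V : Type*} [Fintype V] (G : SimpleGraph V) (w : Sym2 V → ℕ)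
    (H' H : G.Subgraph) : Prop :=
  Dominates G w H' H ∧
    (H.verts ⊂ H'.verts ∨ subgraphCost G w H' < subgraphCost G w H)

/-!
An edge of `G` joining two components of `H'` is a deleted edge of `H'`; adding it keeps `H'`
balanced and removes its positive weight from the cost. So, by minimality, the components of
`H'` are pairwise non-adjacent in `G`, and the connected `H` lies in a single one of them. Any
other component has, as `G` is connected, an edge of `G` leaving it, necessarily to a vertex
outside `H'`; deleting that component keeps `V(H)` and balance, creates no deleted edge and
removes that one, again contradicting minimality.
-/

namespace SimpleGraph.Subgraph

variable {V : Type*} {G : SimpleGraph V}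

def deletedEdges (H : G.Subgraph) : Set (Sym2 V) :=
  {e | e ∈ G.edgeSet ∧ (∃ x ∈ e, x ∈ H.verts) ∧ e ∉ H.edgeSet}

lemma subgraphCost_lt_of_deletedEdges_ssubset [Fintype V] {w : Sym2 V → ℕ}
    (hw : ∀ e ∈ G.edgeSet, 0 < w e) {K H : G.Subgraph}
    (h : K.deletedEdges ⊂ H.deletedEdges) : subgraphCost G w K < subgraphCost G w H := by
  have mem_filter : ∀ (L : G.Subgraph) (e : Sym2 V),
      e ∈ G.edgeFinset.filter (fun e => (∃ x ∈ e, x ∈ L.verts) ∧ e ∉ L.edgeSet) ↔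
        e ∈ L.deletedEdges := by
    simp only [Finset.mem_filter, mem_edgeFinset, deletedEdges, Set.mem_ofPred_eq]
    tauto
  obtain ⟨e, heH, heK⟩ := Set.exists_of_ssubset h
  exact Finset.sum_lt_sum_of_subset (fun f hf => (mem_filter H f).2 (h.1 ((mem_filter K f).1 hf)))
    ((mem_filter H e).2 heH) (fun he => heK ((mem_filter K e).1 he)) (hw e heH.1)
    (fun _ _ _ => Nat.zero_le _)

lemma deletedEdges_sup_subgraphOfAdj_ssubset {H : G.Subgraph} {x y : V} (hxy : G.Adj x y)
    (hx : x ∈ H.verts) (hy : y ∈ H.verts) (hnadj : ¬ H.Adj x y) :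
    (H ⊔ G.subgraphOfAdj hxy).deletedEdges ⊂ H.deletedEdges := by
  have hverts : (H ⊔ G.subgraphOfAdj hxy).verts = H.verts := by
    simp [hx, hy]
  have hsub : (H ⊔ G.subgraphOfAdj hxy).deletedEdges ⊆ H.deletedEdges := by
    rintro e ⟨he, htouch, hnot⟩
    rw [hverts] at htouch
    exact ⟨he, htouch, fun heH => hnot (edgeSet_mono le_sup_left heH)⟩
  refine (Set.ssubset_iff_of_subset hsub).2
    ⟨s(x, y), ⟨G.mem_edgeSet.2 hxy, ⟨x, Sym2.mem_mk_left x y, hx⟩, hnadj⟩, ?_⟩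
  rintro ⟨-, -, hnot⟩
  exact hnot (by simp)

lemma deletedEdges_deleteVerts_subset {H : G.Subgraph} {S : Set V}
    (hS : ∀ ⦃u z⦄, u ∈ S → H.Adj u z → z ∈ S) :
    (H.deleteVerts S).deletedEdges ⊆ H.deletedEdges := by
  rintro e ⟨he, ⟨z, hze, hzH, hzS⟩, hnot⟩
  refine ⟨he, ⟨z, hze, hzH⟩, fun heH => hnot ?_⟩
  induction e using Sym2.ind with
  | _ a b =>
    rcases Sym2.mem_iff.1 hze with rfl | rfl
    · exact deleteVerts_adj.2
        ⟨heH.fst_mem, hzS, heH.snd_mem, fun hb => hzS (hS hb heH.symm), heH⟩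
    · exact deleteVerts_adj.2
        ⟨heH.fst_mem, fun ha => hzS (hS ha heH), heH.snd_mem, hzS, heH⟩

lemma deletedEdges_deleteVerts_ssubset {H : G.Subgraph} {S : Set V}
    (hS : ∀ ⦃u z⦄, u ∈ S → H.Adj u z → z ∈ S) {x y : V} (hxy : G.Adj x y)
    (hxS : x ∈ S) (hx : x ∈ H.verts) (hy : y ∉ H.verts) :
    (H.deleteVerts S).deletedEdges ⊂ H.deletedEdges := by
  refine (Set.ssubset_iff_of_subset (deletedEdges_deleteVerts_subset hS)).2
    ⟨s(x, y), ⟨G.mem_edgeSet.2 hxy, ⟨x, Sym2.mem_mk_left x y, hx⟩, fun h => hy h.snd_mem⟩,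
      ?_⟩
  rintro ⟨-, ⟨z, hz, hzH, hzS⟩, -⟩
  rcases Sym2.mem_iff.1 hz with rfl | rfl
  · exact hzS hxS
  · exact hy hzH

lemma Preconnected.reachable_of_adj_reachable {H : G.Subgraph} {A : SimpleGraph V}
    (hH : H.Preconnected) (hadj : ∀ ⦃x y⦄, H.Adj x y → A.Reachable x y)
    {x y : V} (hx : x ∈ H.verts) (hy : y ∈ H.verts) : A.Reachable x y := by
  have hxy := (reachable_iff_reflTransGen _ _).1 (hH ⟨x, hx⟩ ⟨y, hy⟩)
  exact (reachable_iff_reflTransGen x y).2 <|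
    hxy.lift' Subtype.val fun _ _ h => (reachable_iff_reflTransGen _ _).1 (hadj h)

lemma reachable_coe_of_reachable_spanningCoe {H : G.Subgraph} {u v : H.verts}
    (h : H.spanningCoe.Reachable u v) : H.coe.Reachable u v := by
  suffices ∀ {a b : V} (_ : H.spanningCoe.Walk a b) (ha : a ∈ H.verts),
      ∃ hb : b ∈ H.verts, H.coe.Reachable ⟨a, ha⟩ ⟨b, hb⟩ from
    h.elim fun p => (this p u.2).2
  intro a b p
  induction p with
  | nil => exact fun ha => ⟨ha, .rfl⟩
  | cons hadj _ ih =>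
    intro ha
    obtain ⟨hb, hreach⟩ := ih hadj.snd_mem
    have hadj' : H.coe.Adj ⟨_, ha⟩ ⟨_, hadj.snd_mem⟩ := hadj
    exact ⟨hb, hadj'.reachable.trans hreach⟩

end SimpleGraph.Subgraph

open SimpleGraph.Subgraph

theorem min_cost_dominating_balanced_subgraph_connected_general
    {V : Type*} [Fintype V] (G : SimpleGraph V) (hGconn : G.Connected)
    (w : Sym2 V → ℕ) (hw : ∀ e ∈ G.edgeSet, 0 < w e)
    (B : G.Subgraph → Prop)
    (hBdown : ∀ H K : G.Subgraph, B H → K ≤ H → B K)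
    (hBbridge : ∀ (H : G.Subgraph) (x y : V) (hxy : G.Adj x y), B H →
      ¬ H.spanningCoe.Reachable x y → B (H ⊔ G.subgraphOfAdj hxy))
    (H H' : G.Subgraph) (hHconn : H.Connected)
    (hH'bal : B H') (hH'dom : Dominates G w H' H)
    (hmin : ∀ K : G.Subgraph, B K → Dominates G w K H →
      subgraphCost G w H' ≤ subgraphCost G w K) :
    H'.Connected := by
  have not_improvable : ∀ K : G.Subgraph, B K → H.verts ⊆ K.verts →
      ¬ K.deletedEdges ⊂ H'.deletedEdges := fun K hK hV hlt =>
    (hmin K hK ⟨hV, (subgraphCost_lt_of_deletedEdges_ssubset hw hlt).le.trans hH'dom.2⟩).not_gt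
      (subgraphCost_lt_of_deletedEdges_ssubset hw hlt)
  have reachable_of_adj : ∀ ⦃x y⦄, G.Adj x y → x ∈ H'.verts → y ∈ H'.verts →
      H'.spanningCoe.Reachable x y := fun x y hxy hx hy => by
    by_contra hxy'
    exact not_improvable _ (hBbridge H' x y hxy hH'bal hxy') (hH'dom.1.trans Set.subset_union_left)
      (deletedEdges_sup_subgraphOfAdj_ssubset hxy hx hy fun h => hxy' (SimpleGraph.Adj.reachable h))
  obtain ⟨h₀, hh₀⟩ := hHconn.nonempty
  have reachable_of_mem_H : ∀ h ∈ H.verts, H'.spanningCoe.Reachable h h₀ := fun h hh =>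
    hHconn.preconnected.reachable_of_adj_reachable (fun _ _ hxy => reachable_of_adj hxy.adj_sub
      (hH'dom.1 hxy.fst_mem) (hH'dom.1 hxy.snd_mem)) hh hh₀
  have reachable_of_mem_H' : ∀ v ∈ H'.verts, H'.spanningCoe.Reachable v h₀ := by
    intro v hv
    by_contra hv₀
    let S : Set V := {u | u ∈ H'.verts ∧ H'.spanningCoe.Reachable v u}
    have hS : ∀ ⦃u z⦄, u ∈ S → H'.Adj u z → z ∈ S := fun _ _ hu huz =>
      ⟨huz.snd_mem, hu.2.trans (SimpleGraph.Adj.reachable huz)⟩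
    obtain ⟨p⟩ := hGconn.preconnected v h₀
    obtain ⟨d, -, hdS, hdS'⟩ := p.exists_boundary_dart S ⟨hv, .rfl⟩ fun h => hv₀ h.2
    by_cases hy : d.snd ∈ H'.verts
    · exact hdS' ⟨hy, hdS.2.trans (reachable_of_adj d.adj hdS.1 hy)⟩
    · exact not_improvable _ (hBdown H' _ hH'bal deleteVerts_le)
        (fun h hh => ⟨hH'dom.1 hh, fun hhS => hv₀ (hhS.2.trans (reachable_of_mem_H h hh))⟩)
        (deletedEdges_deleteVerts_ssubset hS d.adj hdS hdS.1 hy)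
  refine SimpleGraph.Subgraph.connected_iff.2 ⟨⟨fun a b => ?_⟩, ⟨h₀, hH'dom.1 hh₀⟩⟩
  exact reachable_coe_of_reachable_spanningCoe
    ((reachable_of_mem_H' a a.2).trans (reachable_of_mem_H' b b.2).symm)

/-- Connectivity of minimum-cost dominating balanced subgraphs: in a connected
graph `G` with strictly positive edge weights, given a notion of balancedness
`B` on subgraphs that is downward closed and preserved by adding an edge between
two components (as holds for the balanced subgraphs of any biased graph), if a
connected balanced subgraph `H` is strictly dominated by some balanced subgraph,
then any balanced subgraph `H'` of minimum cost among the balanced subgraphs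
dominating `H` is connected. -/
theorem min_cost_dominating_balanced_subgraph_connected
    {V : Type*} [Fintype V] (G : SimpleGraph V) (hGconn : G.Connected)
    (w : Sym2 V → ℕ) (hw : ∀ e ∈ G.edgeSet, 0 < w e)
    (B : G.Subgraph → Prop)
    (hBdown : ∀ H K : G.Subgraph, B H → K ≤ H → B K)
    (hBbridge : ∀ (H : G.Subgraph) (x y : V) (hxy : G.Adj x y), B H →
      ¬ H.spanningCoe.Reachable x y → B (H ⊔ G.subgraphOfAdj hxy))
    (H H' : G.Subgraph) (hHconn : H.Connected) (hHbal : B H)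
    (hstrict : ∃ K : G.Subgraph, B K ∧ StrictlyDominates G w K H)
    (hH'bal : B H') (hH'dom : Dominates G w H' H)
    (hmin : ∀ K : G.Subgraph, B K → Dominates G w K H →
      subgraphCost G w H' ≤ subgraphCost G w K) :
    H'.Connected :=
  min_cost_dominating_balanced_subgraph_connected_general G hGconn w hw B hBdown hBbridge H H'
    hHconn hH'bal hH'dom hmin
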